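/- Let j ≥ 2 and let f ∈ C([0,1]²) be such that for every fixed y ∈ [0,1] the function x ↦ f(x,y) is increasing with x ↦ f(x^{1/j}, y) convex, and for every fixed x ∈ [0,1] the function y ↦ f(x,y) is increasing with y ↦ f(x, y^{1/j}) convex. Then f ≤ B_{n,m,j} f ≤ B_{n,m} f pointwise on [0,1]² for all n, m ≥ j. -/

import Mathlib

open Set Finset

/-- Bernstein basis polynomial `p_{n,k}(x) = C(n,k) x^k (1-x)^{n-k}`. -/
noncomputable def bp (n k : ℕ) (x : ℝ) : ℝ :=
  (n.choose k : ℝ) * x ^ k * (1 - x) ^ (n - k)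

/-- AKR node `t_{n,k}^j = (k(k-1)⋯(k-j+1)/(n(n-1)⋯(n-j+1)))^{1/j}`. -/
noncomputable def akrNode (n j k : ℕ) : ℝ :=
  ((∏ i ∈ Finset.range j, ((k : ℝ) - i)) / (∏ i ∈ Finset.range j, ((n : ℝ) - i))) ^ ((j : ℝ)⁻¹)

/-- Classical Bernstein operator. -/
noncomputable def bern (n : ℕ) (f : ℝ → ℝ) (x : ℝ) : ℝ :=
  ∑ k ∈ Finset.range (n + 1), f ((k : ℝ) / n) * bp n k x

/-- Aldaz–Kounchev–Render operator. -/
noncomputable def akr (n j : ℕ) (f : ℝ → ℝ) (x : ℝ) : ℝ :=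
  ∑ k ∈ Finset.range (n + 1), f (akrNode n j k) * bp n k x

/-- Bivariate tensor-product Bernstein operator. -/
noncomputable def bern2 (n m : ℕ) (f : ℝ → ℝ → ℝ) (x y : ℝ) : ℝ :=
  ∑ i ∈ Finset.range (n + 1), ∑ k ∈ Finset.range (m + 1),
    f ((i : ℝ) / n) ((k : ℝ) / m) * bp n i x * bp m k y

/-- Bivariate tensor-product AKR operator. -/
noncomputable def akr2 (n m j : ℕ) (f : ℝ → ℝ → ℝ) (x y : ℝ) : ℝ :=
  ∑ i ∈ Finset.range (n + 1), ∑ k ∈ Finset.range (m + 1),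
    f (akrNode n j i) (akrNode m j k) * bp n i x * bp m k y

/-!
With falling factorials `k^{(j)}`, the AKR node is `t_{n,k} = r_k^{1/j}` for
`r_k = k^{(j)} / n^{(j)}`. The moment identity `∑ k^{(j)} p_{n,k}(x) = n^{(j)} x^j` says that the
Bernstein weights `p_{n,k}(x)` have barycentre `x^j` on the points `r_k`, so Jensen's inequality
for the convex function `u ↦ g(u^{1/j})` gives `g x ≤ akr n j g x`. Since
`k^{(j)} n^j ≤ k^j n^{(j)}`, the AKR nodes lie to the left of the Bernstein nodes `k/n`, and a
nondecreasing `g` gives `akr n j g ≤ bern n g`. Both bivariate operators are iterated univariate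
operators with nonnegative weights, so these two inequalities, applied once in each variable, give
the bivariate ones.
-/

lemma bp_nonneg {n k : ℕ} {x : ℝ} (hx : x ∈ Icc (0 : ℝ) 1) : 0 ≤ bp n k x :=
  mul_nonneg (mul_nonneg (Nat.cast_nonneg _) (pow_nonneg hx.1 _)) (pow_nonneg (sub_nonneg.2 hx.2) _)

lemma sum_bp (n : ℕ) (x : ℝ) : ∑ k ∈ range (n + 1), bp n k x = 1 := by
  calc ∑ k ∈ range (n + 1), bp n k x
      = ∑ k ∈ range (n + 1), x ^ k * (1 - x) ^ (n - k) * n.choose k :=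
        sum_congr rfl fun k _ => by unfold bp; ring
    _ = 1 := by rw [← add_pow, add_sub_cancel, one_pow]

lemma Nat.descFactorial_mul_choose {n k j : ℕ} (hjk : j ≤ k) :
    k.descFactorial j * n.choose k = n.descFactorial j * (n - j).choose (k - j) := by
  rw [descFactorial_eq_factorial_mul_choose, descFactorial_eq_factorial_mul_choose,
    Nat.mul_assoc, Nat.mul_assoc, Nat.mul_comm (k.choose j), choose_mul hjk]

lemma Nat.descFactorial_mul_pow_le {k n : ℕ} (hkn : k ≤ n) :
    ∀ j, k.descFactorial j * n ^ j ≤ k ^ j * n.descFactorial j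
  | 0 => le_rfl
  | j + 1 => by
    have step : (k - j) * n ≤ k * (n - j) := by
      rw [Nat.sub_mul, Nat.mul_sub]
      exact Nat.sub_le_sub_left (by rw [Nat.mul_comm]; exact Nat.mul_le_mul_left j hkn) _
    calc k.descFactorial (j + 1) * n ^ (j + 1)
        = k.descFactorial j * n ^ j * ((k - j) * n) := by rw [descFactorial_succ, pow_succ]; ring
      _ ≤ k ^ j * n.descFactorial j * (k * (n - j)) :=
        Nat.mul_le_mul (descFactorial_mul_pow_le hkn j) step
      _ = k ^ (j + 1) * n.descFactorial (j + 1) := by rw [descFactorial_succ, pow_succ]; ring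

theorem sum_descFactorial_mul_bp (n j : ℕ) (x : ℝ) :
    ∑ k ∈ range (n + 1), (k.descFactorial j : ℝ) * bp n k x = n.descFactorial j * x ^ j := by
  have vanish : ∀ k < j, (k.descFactorial j : ℝ) * bp n k x = 0 := fun k hk => by
    rw [Nat.descFactorial_eq_zero_iff_lt.2 hk, Nat.cast_zero, zero_mul]
  rcases lt_or_ge n j with hnj | hjn
  · rw [Nat.descFactorial_eq_zero_iff_lt.2 hnj, Nat.cast_zero, zero_mul]
    exact sum_eq_zero fun k hk => vanish k (by grind)
  obtain ⟨l, rfl⟩ := Nat.exists_eq_add_of_le hjn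
  rw [add_assoc, sum_range_add, sum_eq_zero fun k hk => vanish k (mem_range.1 hk), zero_add]
  calc ∑ i ∈ range (l + 1), ((j + i).descFactorial j : ℝ) * bp (j + l) (j + i) x
      = ∑ i ∈ range (l + 1), ((j + l).descFactorial j * x ^ j) * bp l i x := by
        refine sum_congr rfl fun i _ => ?_
        have h : ((j + i).descFactorial j : ℝ) * (j + l).choose (j + i)
            = (j + l).descFactorial j * l.choose i := by
          exact_mod_cast (Nat.descFactorial_mul_choose (n := j + l) (Nat.le_add_right j i)).trans
            (by simp only [Nat.add_sub_cancel_left])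
        simp only [bp, Nat.add_sub_add_left, pow_add]
        linear_combination (x ^ j * x ^ i * (1 - x) ^ (l - i)) * h
    _ = (j + l).descFactorial j * x ^ j := by rw [← mul_sum, sum_bp, mul_one]

lemma akrNode_eq (n j k : ℕ) :
    akrNode n j k = ((k.descFactorial j : ℝ) / n.descFactorial j) ^ (j : ℝ)⁻¹ := by
  simp only [akrNode, ← descPochhammer_eval_eq_prod_range, descPochhammer_eval_eq_descFactorial]

lemma descFactorial_div_mem_Icc {n k : ℕ} (j : ℕ) (hkn : k ≤ n) :
    (k.descFactorial j : ℝ) / n.descFactorial j ∈ Icc (0 : ℝ) 1 :=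
  ⟨by positivity,
    div_le_one_of_le₀ (by exact_mod_cast Nat.descFactorial_le j hkn) (Nat.cast_nonneg _)⟩

lemma akrNode_mem_Icc {n k : ℕ} (j : ℕ) (hkn : k ≤ n) : akrNode n j k ∈ Icc (0 : ℝ) 1 := by
  obtain ⟨h₀, h₁⟩ := descFactorial_div_mem_Icc j hkn
  rw [akrNode_eq]
  exact ⟨Real.rpow_nonneg h₀ _, Real.rpow_le_one h₀ h₁ (by positivity)⟩

lemma akrNode_le_div {n j k : ℕ} (hj : j ≠ 0) (hjn : j ≤ n) (hkn : k ≤ n) :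
    akrNode n j k ≤ k / n := by
  have hratio : (k.descFactorial j : ℝ) / n.descFactorial j ≤ ((k : ℝ) / n) ^ j := by
    have hn : (0 : ℝ) < n := by exact_mod_cast (show 0 < n by omega)
    rw [div_pow, div_le_div_iff₀ (by exact_mod_cast Nat.descFactorial_pos.2 hjn) (by positivity)]
    exact_mod_cast Nat.descFactorial_mul_pow_le hkn j
  calc akrNode n j k ≤ (((k : ℝ) / n) ^ j) ^ (j : ℝ)⁻¹ := by
        rw [akrNode_eq]
        exact Real.rpow_le_rpow (by positivity) hratio (by positivity)
    _ = k / n := Real.pow_rpow_inv_natCast (by positivity) hj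

lemma natCast_div_mem_Icc {n k : ℕ} (hkn : k ≤ n) : (k : ℝ) / n ∈ Icc (0 : ℝ) 1 :=
  ⟨by positivity, div_le_one_of_le₀ (by exact_mod_cast hkn) (Nat.cast_nonneg _)⟩

/-- `akr` and `bern` are the instances `t = akrNode n j` and `t = (· / n)`. -/
noncomputable def nodalBernstein (n : ℕ) (t : ℕ → ℝ) (g : ℝ → ℝ) (x : ℝ) : ℝ :=
  ∑ k ∈ range (n + 1), g (t k) * bp n k x

noncomputable def nodalBernstein2 (n m : ℕ) (s t : ℕ → ℝ) (f : ℝ → ℝ → ℝ) (x y : ℝ) : ℝ :=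
  ∑ i ∈ range (n + 1), ∑ k ∈ range (m + 1), f (s i) (t k) * bp n i x * bp m k y

section Nodal

variable {n m : ℕ} {s t : ℕ → ℝ}

lemma nodalBernstein_mono {g h : ℝ → ℝ} {x : ℝ} (hx : x ∈ Icc (0 : ℝ) 1)
    (hgh : ∀ k ∈ range (n + 1), g (s k) ≤ h (t k)) :
    nodalBernstein n s g x ≤ nodalBernstein n t h x :=
  sum_le_sum fun k hk => mul_le_mul_of_nonneg_right (hgh k hk) (bp_nonneg hx)

lemma nodalBernstein2_eq_left (f : ℝ → ℝ → ℝ) (x y : ℝ) :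
    nodalBernstein2 n m s t f x y = nodalBernstein n s (fun u => nodalBernstein m t (f u) y) x := by
  simp only [nodalBernstein, nodalBernstein2, sum_mul]
  exact sum_congr rfl fun i _ => sum_congr rfl fun k _ => by ring

lemma nodalBernstein2_eq_right (f : ℝ → ℝ → ℝ) (x y : ℝ) :
    nodalBernstein2 n m s t f x y =
      nodalBernstein m t (fun v => nodalBernstein n s (fun u => f u v) x) y := by
  simp only [nodalBernstein, nodalBernstein2, sum_mul]
  rw [sum_comm]

end Nodal

theorem le_akr {n j : ℕ} (hj : j ≠ 0) (hjn : j ≤ n) {g : ℝ → ℝ}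
    (hg : ConvexOn ℝ (Icc 0 1) fun u => g (u ^ (j : ℝ)⁻¹)) {x : ℝ} (hx : x ∈ Icc (0 : ℝ) 1) :
    g x ≤ akr n j g x := by
  have hmean : ∑ k ∈ range (n + 1), bp n k x • ((k.descFactorial j : ℝ) / n.descFactorial j)
      = x ^ j := by
    have hD : (n.descFactorial j : ℝ) ≠ 0 := by exact_mod_cast (Nat.descFactorial_pos.2 hjn).ne'
    calc _ = (∑ k ∈ range (n + 1), (k.descFactorial j : ℝ) * bp n k x) / n.descFactorial j := by
          rw [sum_div]
          exact sum_congr rfl fun k _ => by rw [smul_eq_mul]; ring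
      _ = x ^ j := by rw [sum_descFactorial_mul_bp, mul_div_cancel_left₀ _ hD]
  have jensen := hg.map_sum_le (fun k _ => bp_nonneg hx) (sum_bp n x)
    fun k hk => descFactorial_div_mem_Icc j (Nat.lt_succ_iff.1 (mem_range.1 hk))
  rw [hmean, Real.pow_rpow_inv_natCast hx.1 hj] at jensen
  simpa only [akr, akrNode_eq, smul_eq_mul, mul_comm (bp n _ x)] using jensen

theorem akr_le_bern {n j : ℕ} (hj : j ≠ 0) (hjn : j ≤ n) {g : ℝ → ℝ}
    (hg : MonotoneOn g (Icc 0 1)) {x : ℝ} (hx : x ∈ Icc (0 : ℝ) 1) :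
    akr n j g x ≤ bern n g x :=
  nodalBernstein_mono hx fun _ hk =>
    have hkn := Nat.lt_succ_iff.1 (mem_range.1 hk)
    hg (akrNode_mem_Icc j hkn) (natCast_div_mem_Icc hkn) (akrNode_le_div hj hjn hkn)

theorem stmt19_general (j n m : ℕ) (hj : 2 ≤ j) (hn : j ≤ n) (hm : j ≤ m)
    (f : ℝ → ℝ → ℝ)
    (hx : ∀ y ∈ Icc (0:ℝ) 1, MonotoneOn (fun x => f x y) (Icc 0 1) ∧
      ConvexOn ℝ (Icc 0 1) (fun x => f (x ^ ((j : ℝ)⁻¹)) y))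
    (hy : ∀ x ∈ Icc (0:ℝ) 1, MonotoneOn (fun y => f x y) (Icc 0 1) ∧
      ConvexOn ℝ (Icc 0 1) (fun y => f x (y ^ ((j : ℝ)⁻¹)))) :
    ∀ x ∈ Icc (0:ℝ) 1, ∀ y ∈ Icc (0:ℝ) 1,
      f x y ≤ akr2 n m j f x y ∧ akr2 n m j f x y ≤ bern2 n m f x y := by
  have hj₀ : j ≠ 0 := by omega
  have hakr (N k : ℕ) (hk : k ∈ range (N + 1)) : akrNode N j k ∈ Icc (0 : ℝ) 1 :=
    akrNode_mem_Icc j (Nat.lt_succ_iff.1 (mem_range.1 hk))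
  have hgrid (k : ℕ) (hk : k ∈ range (m + 1)) : (k : ℝ) / m ∈ Icc (0 : ℝ) 1 :=
    natCast_div_mem_Icc (Nat.lt_succ_iff.1 (mem_range.1 hk))
  intro x hx₀ y hy₀
  constructor
  · calc f x y ≤ akr m j (f x) y := le_akr hj₀ hm (hy x hx₀).2 hy₀
      _ ≤ nodalBernstein m (akrNode m j) (fun v => akr n j (f · v) x) y :=
        nodalBernstein_mono hy₀ fun k hk =>
          le_akr (g := (f · _)) hj₀ hn (hx _ (hakr m k hk)).2 hx₀
      _ = akr2 n m j f x y := (nodalBernstein2_eq_right f x y).symm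
  · calc akr2 n m j f x y
        = nodalBernstein n (akrNode n j) (fun u => akr m j (f u) y) x :=
          nodalBernstein2_eq_left f x y
      _ ≤ nodalBernstein n (akrNode n j) (fun u => bern m (f u) y) x :=
        nodalBernstein_mono hx₀ fun i hi => akr_le_bern hj₀ hm (hy _ (hakr n i hi)).1 hy₀
      -- both sides are `nodalBernstein2 n m (akrNode n j) (· / m) f x y`
      _ = nodalBernstein m (fun k => k / m) (fun v => akr n j (f · v) x) y :=
        (nodalBernstein2_eq_left f x y).symm.trans (nodalBernstein2_eq_right f x y)
      _ ≤ nodalBernstein m (fun k => k / m) (fun v => bern n (f · v) x) y :=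
        nodalBernstein_mono hy₀ fun k hk => akr_le_bern hj₀ hn (hx _ (hgrid k hk)).1 hx₀
      _ = bern2 n m f x y := (nodalBernstein2_eq_right f x y).symm

theorem stmt19 (j n m : ℕ) (hj : 2 ≤ j) (hn : j ≤ n) (hm : j ≤ m)
    (f : ℝ → ℝ → ℝ)
    (hfc : ContinuousOn (fun p : ℝ × ℝ => f p.1 p.2) (Set.Icc (0:ℝ) 1 ×ˢ Set.Icc (0:ℝ) 1))
    (hx : ∀ y ∈ Icc (0:ℝ) 1, MonotoneOn (fun x => f x y) (Icc 0 1) ∧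
      ConvexOn ℝ (Icc 0 1) (fun x => f (x ^ ((j : ℝ)⁻¹)) y))
    (hy : ∀ x ∈ Icc (0:ℝ) 1, MonotoneOn (fun y => f x y) (Icc 0 1) ∧
      ConvexOn ℝ (Icc 0 1) (fun y => f x (y ^ ((j : ℝ)⁻¹)))) :
    ∀ x ∈ Icc (0:ℝ) 1, ∀ y ∈ Icc (0:ℝ) 1,
      f x y ≤ akr2 n m j f x y ∧ akr2 n m j f x y ≤ bern2 n m f x y :=
  stmt19_general j n m hj hn hm f hx hy
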